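/- arXiv:1202.4707 — 2 statements merged into one kernel-verified Lean document; each statement's English description precedes it below -/
import Mathlib

section
/- A proper rational transfer function G(s) = b(s)/a(s) with a Hurwitz denominator and a zero z with Re z > 0 (non-minimum phase) has a step response that satisfies ∫₀^∞ e^{−z t} y(t) dt = 0 whenever G(z) is defined, where y is the step response; in particular if the DC gain G(0) > 0, the step response y cannot be nonnegative for all t ≥ 0 unless it is identically zero. -/
/-!
At the zero `z` the Laplace transform `G(z)/z` of the step response vanishes, so
`∫₀^∞ e^{-zt} y(t) dt = 0`. If moreover `y ≥ 0`, the integrand is a continuous nonnegative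
function with zero integral over the open half-line, hence it vanishes there; since
`e^{-zt} > 0`, so does `y`.
-/

open MeasureTheory Set

theorem eqOn_zero_of_setIntegral_eq_zero_of_nonneg {X : Type*} [TopologicalSpace X]
    [MeasurableSpace X] [OpensMeasurableSpace X] {μ : Measure X} [μ.IsOpenPosMeasure]
    {f : X → ℝ} {U : Set X}
    (hU : IsOpen U) (hf : ContinuousOn f U) (hf_nonneg : ∀ x ∈ U, 0 ≤ f x)
    (hfi : IntegrableOn f U μ) (h : ∫ x in U, f x ∂μ = 0) : EqOn f 0 U := by
  have hf_nonneg_ae : 0 ≤ᵐ[μ.restrict U] f := by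
    filter_upwards [self_mem_ae_restrict hU.measurableSet] with x hx using hf_nonneg x hx
  have hf_ae_zero : f =ᵐ[μ.restrict U] 0 :=
    (setIntegral_eq_zero_iff_of_nonneg_ae hf_nonneg_ae hfi).mp h
  exact Measure.eqOn_open_of_ae_eq hf_ae_zero hU hf continuousOn_const

theorem nonminimum_phase_step_response_integral_general
    (a b : Polynomial ℝ)
    (z : ℝ) (hz : 0 < z) (hzzero : b.eval z = 0)
    (y : ℝ → ℝ) (hyc : Continuous y)
    (hint : ∀ s : ℝ, 0 < s →
      IntegrableOn (fun t => Real.exp (-s * t) * y t) (Set.Ioi 0))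
    (hlaplace : ∀ s : ℝ, 0 < s →
      ∫ t in Set.Ioi (0 : ℝ), Real.exp (-s * t) * y t = b.eval s / (a.eval s * s)) :
    (∫ t in Set.Ioi (0 : ℝ), Real.exp (-z * t) * y t = 0) ∧
    (0 < b.eval 0 / a.eval 0 →
      (∀ t : ℝ, 0 < t → 0 ≤ y t) → ∀ t : ℝ, 0 < t → y t = 0) := by
  have hI : ∫ t in Ioi (0 : ℝ), Real.exp (-z * t) * y t = 0 := by
    rw [hlaplace z hz, hzzero, zero_div]
  refine ⟨hI, fun _ hy_nonneg t ht => ?_⟩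
  have hweighted : Real.exp (-z * t) * y t = 0 :=
    eqOn_zero_of_setIntegral_eq_zero_of_nonneg isOpen_Ioi (by fun_prop)
      (fun s hs => mul_nonneg (Real.exp_pos _).le (hy_nonneg s hs)) (hint z hz) hI ht
  exact (mul_eq_zero.mp hweighted).resolve_left (Real.exp_ne_zero _)

/-- Non-minimum phase zero constraint on the step response: if `G = b/a` is proper
with Hurwitz denominator and `z > 0` is a real right-half-plane zero of `G`, then the
step response `y` (characterized by its Laplace transform `G(s)/s`) satisfies
`∫₀^∞ e^{−z t} y(t) dt = 0`; in particular if `G(0) > 0` then `y` cannot be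
nonnegative on `(0, ∞)` unless it is identically zero there. -/
theorem nonminimum_phase_step_response_integral
    (a b : Polynomial ℝ)
    (hproper : b.degree ≤ a.degree)
    (hHurwitz : ∀ w : ℂ, (a.map (algebraMap ℝ ℂ)).IsRoot w → w.re < 0)
    (z : ℝ) (hz : 0 < z) (hzzero : b.eval z = 0) (hza : a.eval z ≠ 0)
    (y : ℝ → ℝ) (hyc : Continuous y)
    (hint : ∀ s : ℝ, 0 < s →
      IntegrableOn (fun t => Real.exp (-s * t) * y t) (Set.Ioi 0))
    (hlaplace : ∀ s : ℝ, 0 < s →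
      ∫ t in Set.Ioi (0 : ℝ), Real.exp (-s * t) * y t = b.eval s / (a.eval s * s)) :
    (∫ t in Set.Ioi (0 : ℝ), Real.exp (-z * t) * y t = 0) ∧
    (0 < b.eval 0 / a.eval 0 →
      (∀ t : ℝ, 0 < t → 0 ≤ y t) → ∀ t : ℝ, 0 < t → y t = 0) :=
  nonminimum_phase_step_response_integral_general a b z hz hzzero y hyc hint hlaplace
end

section
/- Let G(s) = b(s)/a(s) be a strictly proper rational function with a(s) Hurwitz, G(0) > 0, and a real zero z > 0. Then the step response y(t) = L^{−1}[G(s)/s](t) takes both positive and negative values on (0, ∞). -/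
open MeasureTheory

lemma undershoot_aux (z : ℝ) (hz : 0 < z) (y : ℝ → ℝ) (hyc : Continuous y)
    (hint : IntegrableOn (fun t => Real.exp (-z * t) * y t) (Set.Ioi 0))
    (hzero : ∫ t in Set.Ioi (0 : ℝ), Real.exp (-z * t) * y t = 0)
    (hsign : ∀ t ∈ Set.Ioi (0 : ℝ), y t ≤ 0) :
    ∀ t ∈ Set.Ioi (0 : ℝ), y t = 0 := by
  set f : ℝ → ℝ := fun t => -(Real.exp (-z * t) * y t) with hf
  have hfc : Continuous f := ((Real.continuous_exp.comp (by continuity)).mul hyc).neg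
  have hintf : Integrable f (volume.restrict (Set.Ioi 0)) := hint.neg
  have hnn : 0 ≤ᵐ[volume.restrict (Set.Ioi 0)] f := by
    filter_upwards [ae_restrict_mem measurableSet_Ioi] with t ht
    have h1 : Real.exp (-z * t) * y t ≤ 0 :=
      mul_nonpos_of_nonneg_of_nonpos (Real.exp_pos _).le (hsign t ht)
    simpa [hf] using h1
  have hzero' : ∫ t in Set.Ioi (0 : ℝ), f t = 0 := by
    simp only [hf]
    rw [integral_neg, hzero, neg_zero]
  have hae : f =ᵐ[volume.restrict (Set.Ioi 0)] 0 :=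
    (integral_eq_zero_iff_of_nonneg_ae hnn hintf).mp hzero'
  by_contra h
  push_neg at h
  obtain ⟨t₀, ht₀, hyt₀⟩ := h
  have hft₀ : f t₀ ≠ 0 := by
    simp only [hf, neg_ne_zero]
    exact mul_ne_zero (Real.exp_ne_zero _) hyt₀
  set U : Set ℝ := {t | f t ≠ 0} ∩ Set.Ioi 0 with hU
  have hUopen : IsOpen U :=
    (isOpen_compl_singleton.preimage hfc).inter isOpen_Ioi
  have hUpos : 0 < volume U := hUopen.measure_pos volume ⟨t₀, hft₀, ht₀⟩
  have hnull : volume U = 0 := by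
    have h0 : volume.restrict (Set.Ioi 0) {t | f t ≠ 0} = 0 := by
      have := hae
      rw [Filter.eventuallyEq_iff_exists_mem] at this
      rcases this with ⟨s, hs, hs'⟩
      refine measure_mono_null ?_ hs
      intro t ht hts
      exact ht (hs' hts)
    have hmeas : MeasurableSet {t | f t ≠ 0} :=
      (isOpen_compl_singleton.preimage hfc).measurableSet
    rw [Measure.restrict_apply hmeas] at h0
    exact h0
  exact absurd hnull hUpos.ne'

/-- Undershoot theorem: a strictly proper transfer function `G = b/a` with Hurwitz
denominator, positive DC gain `G(0) > 0` and a real zero `z > 0` has a step response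
taking both positive and negative values on `(0, ∞)`. -/
theorem nonminimum_phase_undershoot
    (a b : Polynomial ℝ)
    (hstrict : b.degree < a.degree)
    (hHurwitz : ∀ w : ℂ, (a.map (algebraMap ℝ ℂ)).IsRoot w → w.re < 0)
    (hDC : 0 < b.eval 0 / a.eval 0)
    (z : ℝ) (hz : 0 < z) (hzzero : b.eval z = 0)
    (y : ℝ → ℝ) (hyc : Continuous y)
    (hint : ∀ s : ℝ, 0 < s →
      IntegrableOn (fun t => Real.exp (-s * t) * y t) (Set.Ioi 0))
    (hlaplace : ∀ s : ℝ, 0 < s →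
      ∫ t in Set.Ioi (0 : ℝ), Real.exp (-s * t) * y t = b.eval s / (a.eval s * s)) :
    (∃ t₁ : ℝ, 0 < t₁ ∧ 0 < y t₁) ∧ (∃ t₂ : ℝ, 0 < t₂ ∧ y t₂ < 0) := by
  -- a has no nonnegative real roots
  have haroot : ∀ s : ℝ, 0 ≤ s → a.eval s ≠ 0 := by
    intro s hs habs
    have : ((s : ℂ)).re < 0 := by
      apply hHurwitz
      simp [Polynomial.IsRoot, Polynomial.eval_map, ← Polynomial.aeval_def]
      rw [show (s : ℂ) = algebraMap ℝ ℂ s from rfl, Polynomial.aeval_algebraMap_apply]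
      simp [habs]
    simp at this
    linarith
  -- b(0) ≠ 0
  have hb0 : b.eval 0 ≠ 0 := by
    intro hb
    rw [hb] at hDC; simp at hDC
  -- choose s₀ > 0 with b(s₀) ≠ 0
  obtain ⟨s₀, hs₀pos, hbs₀⟩ : ∃ s₀ : ℝ, 0 < s₀ ∧ b.eval s₀ ≠ 0 := by
    have hc : Continuous fun s : ℝ => b.eval s := b.continuous
    have hopen : IsOpen {s : ℝ | b.eval s ≠ 0} := isOpen_compl_singleton.preimage hc
    obtain ⟨ε, hε, hball⟩ := Metric.isOpen_iff.mp hopen 0 hb0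
    refine ⟨ε / 2, by linarith, hball ?_⟩
    rw [Metric.mem_ball, Real.dist_eq, sub_zero, abs_of_pos (by linarith : (0:ℝ) < ε/2)]
    linarith
  -- zero integral at z
  have hzint : ∫ t in Set.Ioi (0 : ℝ), Real.exp (-z * t) * y t = 0 := by
    rw [hlaplace z hz, hzzero, zero_div]
  -- the integral at s₀ is nonzero
  have hne : (∫ t in Set.Ioi (0 : ℝ), Real.exp (-s₀ * t) * y t) ≠ 0 := by
    rw [hlaplace s₀ hs₀pos]
    exact div_ne_zero hbs₀ (mul_ne_zero (haroot s₀ hs₀pos.le) hs₀pos.ne')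
  constructor
  · by_contra h
    push_neg at h
    have hzeroy : ∀ t ∈ Set.Ioi (0 : ℝ), y t = 0 :=
      undershoot_aux z hz y hyc (hint z hz) hzint (fun t ht => h t ht)
    apply hne
    rw [setIntegral_congr_fun measurableSet_Ioi
      (g := fun _ => (0 : ℝ)) (fun t ht => by simp [hzeroy t ht])]
    simp
  · by_contra h
    push_neg at h
    have hzeroy : ∀ t ∈ Set.Ioi (0 : ℝ), -y t = 0 := by
      apply undershoot_aux z hz (fun t => -y t) hyc.neg
      · have h1 : (fun t => Real.exp (-z * t) * -y t)
            = fun t => -(Real.exp (-z * t) * y t) := by funext t; ring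
        rw [h1]; exact (hint z hz).neg
      · have h1 : (fun t : ℝ => Real.exp (-z * t) * -y t)
            = fun t => -(Real.exp (-z * t) * y t) := by funext t; ring
        calc ∫ t in Set.Ioi (0:ℝ), Real.exp (-z * t) * -y t
            = ∫ t in Set.Ioi (0:ℝ), -(Real.exp (-z * t) * y t) := by rw [h1]
          _ = 0 := by rw [integral_neg, hzint, neg_zero]
      · intro t ht; simpa using h t ht
    apply hne
    rw [setIntegral_congr_fun measurableSet_Ioi
      (g := fun _ => (0 : ℝ)) (fun t ht => by
        have := hzeroy t ht; simp at this; simp [this])]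
    simp
end
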